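/- For every natural number m ≥ 1 and every natural number n with n ≥ 2 and 2n ≥ 3·(ᵐ2), it holds that log*(ⁿ2) − log⊛(ⁿ2) ≥ m. In particular, the difference log*(α) − log⊛(α) is unbounded as α ranges over towers of 2s. -/

import Mathlib

noncomputable def lg (x : ℝ) : ℝ := Real.logb 2 (max 1 x)

noncomputable def logStar (α : ℝ) : ℕ := sInf {k : ℕ | lg^[k] α ≤ 1}

noncomputable def logCirc (α : ℝ) : ℕ := sSup {k : ℕ | (k : ℝ) ≤ lg^[k] α}

/-- Tetration of 2: `⁰2 = 1`, `ⁿ⁺¹2 = 2^(ⁿ2)`. -/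
def tet : ℕ → ℕ
  | 0 => 1
  | n + 1 => 2 ^ tet n

/-! Along the tower `ⁿ2` each `lg` removes one level, so `log*(ⁿ2) = n` exactly, and for `k ≤ n`
the condition `k ≤ lg^[k](ⁿ2)` reads `k ≤ ⁿ⁻ᵏ2`. If `k > n - m` then `ⁿ⁻ᵏ2 ≤ ᵐ⁻¹2`, so this
fails as soon as `n ≥ m + ᵐ⁻¹2`; and `2n ≥ 3 · ᵐ2 = 3 · 2^(ᵐ⁻¹2) ≥ 4 · ᵐ⁻¹2 ≥ 2(m + ᵐ⁻¹2)`
guarantees that. -/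

lemma lt_tet (k : ℕ) : k < tet k := by
  induction k with
  | zero => simp [tet]
  | succ j ih => exact (Nat.lt_two_pow_self).trans_le (Nat.pow_le_pow_right two_pos ih)

lemma tet_monotone : Monotone tet :=
  monotone_nat_of_le_succ fun _ => Nat.lt_two_pow_self.le

lemma lg_two_pow (t : ℕ) : lg ((2 : ℝ) ^ t) = t := by
  rw [lg, max_eq_right (one_le_pow₀ one_le_two), Real.logb_pow, Real.logb_self_eq_one one_lt_two,
    mul_one]

lemma lg_iterate_of_le_one {x : ℝ} (hx : x ≤ 1) (j : ℕ) : lg^[j] x ≤ 1 := by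
  induction j generalizing x with
  | zero => exact hx
  | succ i ih =>
    rw [Function.iterate_succ_apply]
    exact ih (by rw [lg, max_eq_left hx, Real.logb_one]; exact zero_le_one)

lemma lg_iterate_tet {k n : ℕ} (hk : k ≤ n) : lg^[k] (tet n : ℝ) = tet (n - k) := by
  induction k generalizing n with
  | zero => simp
  | succ j ih =>
    obtain ⟨p, rfl⟩ : ∃ p, n = p + 1 := ⟨n - 1, by omega⟩
    rw [Function.iterate_succ_apply, tet, Nat.cast_pow, Nat.cast_ofNat, lg_two_pow,
      ih (by omega), Nat.add_sub_add_right]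

lemma logStar_tet (n : ℕ) : logStar (tet n) = n := by
  have hn : lg^[n] (tet n : ℝ) ≤ 1 := by rw [lg_iterate_tet le_rfl, Nat.sub_self]; simp [tet]
  refine le_antisymm (Nat.sInf_le hn) (le_csInf ⟨n, hn⟩ fun k hk => ?_)
  by_contra! hkn
  have : 1 < tet (n - k) := (lt_tet _).trans_le' (by omega)
  exact (show lg^[k] (tet n : ℝ) ≤ 1 from hk).not_gt
    (by rw [lg_iterate_tet hkn.le]; exact_mod_cast this)

lemma logCirc_tet_add_le {j n : ℕ} (h : j + 1 + tet j ≤ n) : logCirc (tet n) + (j + 1) ≤ n := by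
  suffices ∀ k : ℕ, (k : ℝ) ≤ lg^[k] (tet n : ℝ) → k + (j + 1) ≤ n by
    have := csSup_le (s := {k : ℕ | (k : ℝ) ≤ lg^[k] (tet n : ℝ)}) ⟨0, by simp⟩ fun k hk =>
      Nat.le_sub_of_add_le (this k hk)
    exact Nat.add_le_of_le_sub (by omega) this
  intro k hk
  by_contra! hlt
  rcases le_or_gt k n with hkn | hnk
  · rw [lg_iterate_tet hkn] at hk
    have : tet (n - k) < k := (tet_monotone (by omega : n - k ≤ j)).trans_lt (by omega)
    exact absurd hk (by exact_mod_cast this.not_ge)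
  · have hle : lg^[k] (tet n : ℝ) ≤ 1 := by
      rw [← Nat.sub_add_cancel hnk.le, Function.iterate_add_apply, lg_iterate_tet le_rfl,
        Nat.sub_self]
      exact lg_iterate_of_le_one (by simp [tet]) _
    have : (2 : ℝ) ≤ k := by exact_mod_cast (show 2 ≤ k by have := lt_tet j; omega)
    linarith

lemma four_mul_le_three_mul_two_pow (t : ℕ) : 4 * t ≤ 3 * 2 ^ t := by
  induction t with
  | zero => norm_num
  | succ s ih =>
    have : 1 ≤ 2 ^ s := Nat.one_le_two_pow
    rw [pow_succ]
    omega

theorem stmt4_general (m : ℕ) (hm : 1 ≤ m) (n : ℕ) (h : 3 * tet m ≤ 2 * n) :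
    (m : ℤ) ≤ (logStar (tet n) : ℤ) - (logCirc (tet n) : ℤ) := by
  obtain ⟨j, rfl⟩ : ∃ j, m = j + 1 := ⟨m - 1, by omega⟩
  have htall : j + 1 + tet j ≤ n := by
    have := lt_tet j
    have := four_mul_le_three_mul_two_pow (tet j)
    simp only [tet] at h
    omega
  have := logCirc_tet_add_le htall
  rw [logStar_tet]
  omega

theorem stmt4 (m : ℕ) (hm : 1 ≤ m) (n : ℕ) (hn : 2 ≤ n) (h : 3 * tet m ≤ 2 * n) :
    (m : ℤ) ≤ (logStar (tet n) : ℤ) - (logCirc (tet n) : ℤ) :=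
  stmt4_general m hm n h
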